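/- Let b, c : [0,∞) → (0,∞) be continuous with b ≤ c, let w solve w'' + b·w = 0 and y solve y'' + c·y = 0, both with value 0 and derivative 1 at 0. Then on any interval (0, r] where y > 0, Picone's identity holds: (w(r)/y(r))·(w'(r)y(r) − w(r)y'(r)) = ∫₀^r (c(x) − b(x))·w(x)² dx + ∫₀^r ((w'(x)y(x) − w(x)y'(x))/y(x))² dx. -/

import Mathlib

/-!
With `W = y w' - y' w`, the two equations give `W' = (c - b) y w`, and differentiating `w W / y`
on `(0, r]` yields exactly the integrand `(c - b) w² + (W / y)²`. At `0` both `W` and `W'`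
vanish while `y' = 1`, so `W / y` extends continuously by `0`; hence `w W / y` is continuous on
`[0, r]`, vanishes at `0`, and the fundamental theorem of calculus applies on the whole interval.
-/

open Set intervalIntegral Filter Topology

/-- The Wronskian `f g' - f' g`, its products written in the order of Picone's identity. -/
noncomputable def wronskian (f g : ℝ → ℝ) (x : ℝ) : ℝ := deriv g x * f x - g x * deriv f x

theorem tendsto_div_of_hasDerivAt_of_eq_zero {f g : ℝ → ℝ} {a b x : ℝ} (hf : HasDerivAt f a x)
    (hg : HasDerivAt g b x) (hfx : f x = 0) (hgx : g x = 0) (hb : b ≠ 0) :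
    Tendsto (fun t => f t / g t) (𝓝[≠] x) (𝓝 (a / b)) := by
  refine ((hasDerivAt_iff_tendsto_slope.mp hf).div (hasDerivAt_iff_tendsto_slope.mp hg) hb).congr'
    ?_
  filter_upwards [self_mem_nhdsWithin] with t ht
  rw [Pi.div_apply, slope_def_field, slope_def_field, hfx, hgx, sub_zero, sub_zero,
    div_div_div_cancel_right₀ (sub_ne_zero.mpr ht)]

/-- The value at `x` is `0 / 0 = 0`, which is the limit. -/
theorem continuousAt_div_of_hasDerivAt_of_eq_zero {f g : ℝ → ℝ} {b x : ℝ} (hf : HasDerivAt f 0 x)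
    (hg : HasDerivAt g b x) (hfx : f x = 0) (hgx : g x = 0) (hb : b ≠ 0) :
    ContinuousAt (fun t => f t / g t) x := by
  refine continuousWithinAt_compl_self.mp ?_
  simpa [ContinuousWithinAt, hfx] using tendsto_div_of_hasDerivAt_of_eq_zero hf hg hfx hgx hb

section Wronskian

variable {f g : ℝ → ℝ} {x : ℝ}

theorem hasDerivAt_wronskian (hf : DifferentiableAt ℝ f x) (hg : DifferentiableAt ℝ g x)
    (hf' : DifferentiableAt ℝ (deriv f) x) (hg' : DifferentiableAt ℝ (deriv g) x) :
    HasDerivAt (wronskian f g) (f x * deriv (deriv g) x - deriv (deriv f) x * g x) x :=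
  ((hg'.hasDerivAt.mul hf.hasDerivAt).sub (hg.hasDerivAt.mul hf'.hasDerivAt)).congr_deriv
    (by ring)

theorem hasDerivAt_wronskian_of_ode {b c : ℝ} (hf : DifferentiableAt ℝ f x)
    (hg : DifferentiableAt ℝ g x) (hf' : DifferentiableAt ℝ (deriv f) x)
    (hg' : DifferentiableAt ℝ (deriv g) x) (hfode : deriv (deriv f) x + c * f x = 0)
    (hgode : deriv (deriv g) x + b * g x = 0) :
    HasDerivAt (wronskian f g) ((c - b) * f x * g x) x := by
  convert hasDerivAt_wronskian hf hg hf' hg' using 1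
  linear_combination g x * hfode - f x * hgode

theorem hasDerivAt_mul_wronskian_div {W' : ℝ} (hf : DifferentiableAt ℝ f x)
    (hg : DifferentiableAt ℝ g x) (hW : HasDerivAt (wronskian f g) W' x) (hfx : f x ≠ 0) :
    HasDerivAt (fun t => g t * (wronskian f g t / f t))
      (g x * W' / f x + (wronskian f g x / f x) ^ 2) x := by
  refine (hg.hasDerivAt.mul (hW.div hf.hasDerivAt hfx)).congr_deriv ?_
  simp only [Pi.div_apply, wronskian]
  field_simp
  ring

end Wronskian

theorem stmt_17_general (b c w y : ℝ → ℝ)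
    (hb_cont : ContinuousOn b (Set.Ici 0))
    (hc_cont : ContinuousOn c (Set.Ici 0))
    (hw : ContDiff ℝ 2 w) (hy : ContDiff ℝ 2 y)
    (hwode : ∀ r : ℝ, 0 ≤ r → deriv (deriv w) r + b r * w r = 0)
    (hyode : ∀ r : ℝ, 0 ≤ r → deriv (deriv y) r + c r * y r = 0)
    (hw0 : w 0 = 0)
    (hy0 : y 0 = 0) (hy0' : deriv y 0 = 1)
    (r : ℝ) (hr : 0 < r)
    (hypos : ∀ x : ℝ, 0 < x → x ≤ r → 0 < y x) :
    (w r / y r) * (deriv w r * y r - w r * deriv y r)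
      = (∫ x in (0 : ℝ)..r, (c x - b x) * (w x) ^ 2)
        + ∫ x in (0 : ℝ)..r, ((deriv w x * y x - w x * deriv y x) / y x) ^ 2 := by
  have hwd : Differentiable ℝ w := hw.differentiable two_ne_zero
  have hyd : Differentiable ℝ y := hy.differentiable two_ne_zero
  have hwd' : Differentiable ℝ (deriv w) := (hw.deriv' (n := 1)).differentiable one_ne_zero
  have hyd' : Differentiable ℝ (deriv y) := (hy.deriv' (n := 1)).differentiable one_ne_zero
  have hW (x : ℝ) (hx : 0 ≤ x) : HasDerivAt (wronskian y w) ((c x - b x) * y x * w x) x :=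
    hasDerivAt_wronskian_of_ode (hyd x) (hwd x) (hyd' x) (hwd' x) (hyode x hx) (hwode x hx)
  have hW0 : wronskian y w 0 = 0 := by simp [wronskian, hw0, hy0]
  have hWy : ContinuousOn (fun t => wronskian y w t / y t) (Icc 0 r) := by
    rintro x ⟨hx0, hxr⟩
    rcases hx0.eq_or_lt with rfl | hx
    · refine (continuousAt_div_of_hasDerivAt_of_eq_zero ?_ (hyd 0).hasDerivAt hW0 hy0
        (by simp [hy0'])).continuousWithinAt
      simpa [hy0] using hW 0 le_rfl
    · exact ((hW x hx.le).continuousAt.div (hyd x).continuousAt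
        (hypos x hx hxr).ne').continuousWithinAt
  have hWy2 : ContinuousOn (fun t => (wronskian y w t / y t) ^ 2) (Icc 0 r) := hWy.pow 2
  have hcb : ContinuousOn (fun x => (c x - b x) * w x ^ 2) (Icc 0 r) :=
    ((hc_cont.sub hb_cont).mono Icc_subset_Ici_self).mul (hwd.continuous.pow 2).continuousOn
  have hG (x : ℝ) (hx : x ∈ Ioo 0 r) : HasDerivAt (fun t => w t * (wronskian y w t / y t))
      ((c x - b x) * w x ^ 2 + (wronskian y w x / y x) ^ 2) x := by
    refine (hasDerivAt_mul_wronskian_div (hyd x) (hwd x) (hW x hx.1.le)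
      (hypos x hx.1 hx.2.le).ne').congr_deriv ?_
    field_simp [(hypos x hx.1 hx.2.le).ne']
  show w r / y r * wronskian y w r = (∫ x in (0 : ℝ)..r, (c x - b x) * w x ^ 2)
    + ∫ x in (0 : ℝ)..r, (wronskian y w x / y x) ^ 2
  rw [← integral_add (hcb.intervalIntegrable_of_Icc hr.le)
    (hWy2.intervalIntegrable_of_Icc hr.le), integral_eq_sub_of_hasDerivAt_of_le hr.le
    (hwd.continuous.continuousOn.mul hWy) hG
    ((hcb.add hWy2).intervalIntegrable_of_Icc hr.le)]
  simp [hw0]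
  ring

/-- Picone's identity for the two solutions `w` (of `w'' + b w = 0`) and `y` (of
`y'' + c y = 0`), both with value `0` and derivative `1` at `0`: on any interval `(0, r]`
where `y > 0`,
`(w r / y r)(w' r · y r − w r · y' r) = ∫₀^r (c − b) w² + ∫₀^r ((w' y − w y')/y)²`. -/
theorem stmt_17 (b c w y : ℝ → ℝ)
    (hb_cont : ContinuousOn b (Set.Ici 0))
    (hc_cont : ContinuousOn c (Set.Ici 0))
    (hb_pos : ∀ r : ℝ, 0 ≤ r → 0 < b r)
    (hc_pos : ∀ r : ℝ, 0 ≤ r → 0 < c r)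
    (hbc : ∀ r : ℝ, 0 ≤ r → b r ≤ c r)
    (hw : ContDiff ℝ 2 w) (hy : ContDiff ℝ 2 y)
    (hwode : ∀ r : ℝ, 0 ≤ r → deriv (deriv w) r + b r * w r = 0)
    (hyode : ∀ r : ℝ, 0 ≤ r → deriv (deriv y) r + c r * y r = 0)
    (hw0 : w 0 = 0) (hw0' : deriv w 0 = 1)
    (hy0 : y 0 = 0) (hy0' : deriv y 0 = 1)
    (r : ℝ) (hr : 0 < r)
    (hypos : ∀ x : ℝ, 0 < x → x ≤ r → 0 < y x) :
    (w r / y r) * (deriv w r * y r - w r * deriv y r)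
      = (∫ x in (0 : ℝ)..r, (c x - b x) * (w x) ^ 2)
        + ∫ x in (0 : ℝ)..r, ((deriv w x * y x - w x * deriv y x) / y x) ^ 2 :=
  stmt_17_general b c w y hb_cont hc_cont hw hy hwode hyode hw0 hy0 hy0' r hr hypos
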